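/- Let E be a real inner product space, ι a finite index type, d : ι → E data points, K a natural number, μ : Fin K → E centroids, and c : ι → Fin K an assignment. Let c* : ι → Fin K be a nearest-centroid assignment with respect to μ (∀ i j, ‖d(i) − μ(c*(i))‖ ≤ ‖d(i) − μ(j)‖), assume every cluster under c* is nonempty, and let μ'(j) be the mean of the points {d(i) : c*(i) = j} for each j. Then Σ_{i} ‖d(i) − μ'(c*(i))‖² ≤ Σ_{i} ‖d(i) − μ(c(i))‖²; that is, one full K-means iteration (assignment step followed by update step) does not increase the WCSS objective. -/

import Mathlib

/-!
The assignment step can only shorten each point's distance to its centroid. For the update step,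
split the objective into clusters: by the parallel axis identity
`∑ ‖dᵢ - y‖² = ∑ ‖dᵢ - m‖² + n ‖m - y‖²`, the mean `m` of a cluster minimises the sum of
squared distances to its points.
-/

open Finset

section Mean

variable {𝕜 M ι : Type*} [DivisionRing 𝕜] [CharZero 𝕜] [AddCommGroup M] [Module 𝕜 M]

theorem sum_sub_mean_eq_zero (s : Finset ι) (d : ι → M) :
    ∑ i ∈ s, (d i - (#s : 𝕜)⁻¹ • ∑ j ∈ s, d j) = 0 := by
  rcases s.eq_empty_or_nonempty with rfl | hs
  · simp
  have hcard : (#s : 𝕜) ≠ 0 := Nat.cast_ne_zero.2 hs.card_pos.ne'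
  rw [sum_sub_distrib, sum_const, ← Nat.cast_smul_eq_nsmul 𝕜, smul_smul,
    mul_inv_cancel₀ hcard, one_smul, sub_self]

end Mean

section ParallelAxis

variable {E ι : Type*} [NormedAddCommGroup E] [InnerProductSpace ℝ E]

theorem sum_norm_sub_sq_eq_of_sum_sub_eq_zero (s : Finset ι) (d : ι → E) {m : E}
    (hm : ∑ i ∈ s, (d i - m) = 0) (y : E) :
    ∑ i ∈ s, ‖d i - y‖ ^ 2 = ∑ i ∈ s, ‖d i - m‖ ^ 2 + #s * ‖m - y‖ ^ 2 := by
  have expand (i : ι) : ‖d i - y‖ ^ 2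
      = ‖d i - m‖ ^ 2 + 2 * inner ℝ (d i - m) (m - y) + ‖m - y‖ ^ 2 := by
    rw [← sub_add_sub_cancel (d i) m y, norm_add_sq_real]
  simp only [expand, sum_add_distrib, ← mul_sum, ← sum_inner, hm, inner_zero_left, mul_zero,
    add_zero, sum_const, nsmul_eq_mul]

theorem sum_norm_sub_mean_sq_le (s : Finset ι) (d : ι → E) (y : E) :
    ∑ i ∈ s, ‖d i - (#s : ℝ)⁻¹ • ∑ j ∈ s, d j‖ ^ 2 ≤ ∑ i ∈ s, ‖d i - y‖ ^ 2 := by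
  rw [sum_norm_sub_sq_eq_of_sum_sub_eq_zero s d (sum_sub_mean_eq_zero (𝕜 := ℝ) s d) y]
  exact le_add_of_nonneg_right (by positivity)

end ParallelAxis

theorem sum_apply_eq_sum_fiberwise {ι κ β : Type*} [Fintype ι] [Fintype κ] [DecidableEq κ]
    [AddCommMonoid β] (g : ι → κ) (f : ι → κ → β) :
    ∑ i, f i (g i) = ∑ j, ∑ i with g i = j, f i j := by
  rw [← sum_fiberwise univ g (fun i => f i (g i))]
  refine sum_congr rfl fun j _ => sum_congr rfl fun i hi => ?_
  rw [(mem_filter.1 hi).2]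

section KMeans

variable {E ι κ : Type*} [Fintype ι]

/-- The K-means objective `J`. -/
def wcss [SeminormedAddCommGroup E] (d : ι → E) (μ : κ → E) (c : ι → κ) : ℝ :=
  ∑ i, ‖d i - μ (c i)‖ ^ 2

/-- For an empty cluster this is `0`, as `(0 : ℝ)⁻¹ = 0`. -/
noncomputable def clusterMean [AddCommGroup E] [Module ℝ E] [DecidableEq κ] (d : ι → E)
    (c : ι → κ) (j : κ) : E :=
  (#{i | c i = j} : ℝ)⁻¹ • ∑ i with c i = j, d i

theorem wcss_le_of_forall_norm_le [SeminormedAddCommGroup E] (d : ι → E) (μ : κ → E)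
    {c c' : ι → κ} (h : ∀ i, ‖d i - μ (c i)‖ ≤ ‖d i - μ (c' i)‖) :
    wcss d μ c ≤ wcss d μ c' :=
  sum_le_sum fun i _ => pow_le_pow_left₀ (norm_nonneg _) (h i) 2

theorem wcss_clusterMean_le [NormedAddCommGroup E] [InnerProductSpace ℝ E] [Fintype κ]
    [DecidableEq κ] (d : ι → E) (μ : κ → E) (c : ι → κ) :
    wcss d (clusterMean d c) c ≤ wcss d μ c := by
  rw [wcss, wcss, sum_apply_eq_sum_fiberwise c (fun i j => ‖d i - clusterMean d c j‖ ^ 2),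
    sum_apply_eq_sum_fiberwise c (fun i j => ‖d i - μ j‖ ^ 2)]
  exact sum_le_sum fun j _ => sum_norm_sub_mean_sq_le _ d (μ j)

end KMeans

theorem kmeans_iteration_nonincreasing_general {E : Type*} [NormedAddCommGroup E]
    [InnerProductSpace ℝ E] {ι : Type*} [Fintype ι] (d : ι → E)
    (K : ℕ) (μ : Fin K → E) (c cstar : ι → Fin K)
    (hstar : ∀ i j, ‖d i - μ (cstar i)‖ ≤ ‖d i - μ j‖)
    (μ' : Fin K → E)
    (hμ' : ∀ j, μ' j
      = (((Finset.univ.filter (fun i => cstar i = j)).card : ℝ))⁻¹ •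
          ∑ i ∈ Finset.univ.filter (fun i => cstar i = j), d i) :
    ∑ i, ‖d i - μ' (cstar i)‖ ^ 2 ≤ ∑ i, ‖d i - μ (c i)‖ ^ 2 := by
  obtain rfl : μ' = clusterMean d cstar := funext hμ'
  calc wcss d (clusterMean d cstar) cstar
      ≤ wcss d μ cstar := wcss_clusterMean_le d μ cstar
    _ ≤ wcss d μ c := wcss_le_of_forall_norm_le d μ fun i => hstar i (c i)

/-- One full K-means iteration (nearest-centroid assignment step followed by
mean update step) does not increase the WCSS objective. -/
theorem kmeans_iteration_nonincreasing {E : Type*} [NormedAddCommGroup E]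
    [InnerProductSpace ℝ E] {ι : Type*} [Fintype ι] (d : ι → E)
    (K : ℕ) (μ : Fin K → E) (c cstar : ι → Fin K)
    (hstar : ∀ i j, ‖d i - μ (cstar i)‖ ≤ ‖d i - μ j‖)
    (hne : ∀ j : Fin K, ∃ i, cstar i = j)
    (μ' : Fin K → E)
    (hμ' : ∀ j, μ' j
      = (((Finset.univ.filter (fun i => cstar i = j)).card : ℝ))⁻¹ •
          ∑ i ∈ Finset.univ.filter (fun i => cstar i = j), d i) :
    ∑ i, ‖d i - μ' (cstar i)‖ ^ 2 ≤ ∑ i, ‖d i - μ (c i)‖ ^ 2 :=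
  kmeans_iteration_nonincreasing_general d K μ c cstar hstar μ' hμ'
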